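/- arXiv:1408.5419 — 4 statements merged into one kernel-verified Lean document; each statement's English description precedes it below -/
import Mathlib

section
/- Let G be a finite group all of whose Sylow subgroups are cyclic. Then G is solvable. -/
universe u

theorem zgroup_solvable_aux :
    ∀ (n : ℕ) (G : Type u) [Group G] [Finite G], Nat.card G = n → IsZGroup G → IsSolvable G := by
  intro n
  induction n using Nat.strong_induction_on with
  | _ n ih =>
    intro G _ _ hn hZ
    rcases le_or_gt (Nat.card G) 1 with hle | hlt
    · have : Subsingleton G := Finite.card_le_one_iff_subsingleton.mp hle
      exact (inferInstance : Group.IsSolvable G)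
    · set p := (Nat.card G).minFac with hp_def
      have hp : p.Prime := Nat.minFac_prime (by omega)
      haveI := Fact.mk hp
      obtain ⟨P⟩ : Nonempty (Sylow p G) := inferInstance
      haveI hcyc : IsCyclic (P : Subgroup G) := hZ.isZGroup p hp P
      have hcomm : ∀ a b : (P : Subgroup G), a * b = b * a := fun a b =>
        (IsCyclic.commGroup (α := (P : Subgroup G))).mul_comm a b
      -- the conjugation map N(P) →* Aut(P)
      set f := (P : Subgroup G).normalizerMonoidHom with hf
      -- P is contained in the kernel
      have hPker : ((P : Subgroup G)).subgroupOf (Subgroup.normalizer ((P : Subgroup G) : Set G)) ≤ f.ker := by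
        rw [hf, Subgroup.normalizerMonoidHom_ker]
        intro x hx
        rw [Subgroup.mem_subgroupOf] at hx ⊢
        exact Subgroup.le_centralizer_iff_isMulCommutative.mpr ⟨⟨hcomm⟩⟩ hx
      -- cardinality of the image
      set m := f.ker.index with hm
      have hm1 : m ∣ Nat.totient (Nat.card (P : Subgroup G)) := by
        rw [hm, Subgroup.index_ker, ← IsCyclic.card_mulAut]
        exact Subgroup.card_subgroup_dvd_card f.range
      have hm2 : m ∣ (P : Subgroup G).index := by
        refine dvd_trans (Subgroup.index_dvd_of_le hPker) ?_
        exact Subgroup.relIndex_dvd_index_of_le Subgroup.le_normalizer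
      have hpk : Nat.card (P : Subgroup G) = p ^ (Nat.card G).factorization p :=
        P.card_eq_multiplicity
      have hk0 : 0 < (Nat.card G).factorization p :=
        hp.factorization_pos_of_dvd (by omega) (Nat.minFac_dvd _)
      have hmeq : m = 1 := by
        by_contra hm_ne
        have hm0 : m ≠ 0 := by
          intro h0
          rw [h0] at hm1
          exact (Nat.totient_pos.mpr Nat.card_pos).ne' (Nat.eq_zero_of_zero_dvd hm1)
        set q := m.minFac with hq
        have hqp : q.Prime := Nat.minFac_prime hm_ne
        have hq_dvd_m : q ∣ m := Nat.minFac_dvd m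
        have hq1 : q ∣ Nat.totient (Nat.card (P : Subgroup G)) := hq_dvd_m.trans hm1
        rw [hpk, Nat.totient_prime_pow hp hk0] at hq1
        have hqne : q ≠ p := by
          intro hqp_eq
          rw [hqp_eq] at hq_dvd_m
          exact P.not_dvd_index (hq_dvd_m.trans hm2)
        have hq_dvd_p1 : q ∣ p - 1 := by
          rcases (Nat.Prime.dvd_mul hqp).mp hq1 with h1 | h1
          · exact absurd (Nat.Prime.dvd_of_dvd_pow hqp h1)
              (fun hd => hqne ((Nat.prime_dvd_prime_iff_eq hqp hp).mp hd))
          · exact h1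
        have hq_lt : q < p := by
          have hp2 := hp.two_le
          have := Nat.le_of_dvd (by omega) hq_dvd_p1
          omega
        have hq_dvd_G : q ∣ Nat.card G :=
          (hq_dvd_m.trans hm2).trans (P : Subgroup G).index_dvd_card
        have : p ≤ q := Nat.minFac_le_of_dvd hqp.two_le hq_dvd_G
        omega
      -- so the normalizer is contained in the centralizer
      have hker_top : f.ker = ⊤ := Subgroup.index_eq_one.mp hmeq
      have hNC : Subgroup.normalizer ((P : Subgroup G) : Set G) ≤ Subgroup.centralizer (P : Set G) := by
        rw [hf, Subgroup.normalizerMonoidHom_ker] at hker_top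
        exact Subgroup.subgroupOf_eq_top.mp hker_top
      -- Burnside's normal p-complement theorem
      set K := (MonoidHom.transferSylow P hNC).ker with hK
      have hcompl := MonoidHom.ker_transferSylow_isComplement' P hNC
      have hcard : Nat.card K * Nat.card (P : Subgroup G) = Nat.card G := hcompl.card_mul
      have hPgt1 : 1 < Nat.card (P : Subgroup G) := by
        rw [hpk]
        exact Nat.one_lt_pow hk0.ne' hp.one_lt
      have hKlt : Nat.card K < n := by
        have hKpos : 0 < Nat.card K := Nat.card_pos
        calc Nat.card K < Nat.card K * Nat.card (P : Subgroup G) := by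
              exact (Nat.lt_mul_iff_one_lt_right hKpos).mpr hPgt1
          _ = Nat.card G := hcard
          _ = n := hn
      haveI : Group.IsSolvable K := ih (Nat.card K) hKlt K rfl inferInstance
      haveI : Group.IsSolvable (P : Subgroup G) := isSolvable_of_comm hcomm
      exact solvable_of_ker_le_range K.subtype (MonoidHom.transferSylow P hNC)
        (by rw [Subgroup.range_subtype])

/-- A finite group all of whose Sylow subgroups are cyclic is solvable. -/
theorem stmt0 (G : Type*) [Group G] [Finite G]
    (h : ∀ (p : ℕ), p.Prime → ∀ P : Sylow p G, IsCyclic P) :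
    IsSolvable G := by
  exact zgroup_solvable_aux (Nat.card G) G rfl ⟨h⟩
end

section
/- Let G be a topologically finitely generated profinite group. Then G has a neighborhood basis of the identity consisting of open subgroups that are invariant under all continuous automorphisms of G (indeed under all topological automorphisms): for every open subgroup U of G there is an open normal subgroup V ≤ U invariant under all continuous automorphisms of G. -/
open QuotientGroup

/-- The permutation action of `G` on `G ⧸ H` is continuous into the discrete
permutation group, when `H` is open. -/
private lemma perm_action_continuous {G : Type*} [Group G] [TopologicalSpace G]
    [IsTopologicalGroup G] (H : Subgroup G) (hH : IsOpen (H : Set G)) [Finite (G ⧸ H)] :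
    letI : TopologicalSpace (Equiv.Perm (G ⧸ H)) := ⊥
    Continuous (MulAction.toPermHom G (G ⧸ H)) := by
  letI : TopologicalSpace (Equiv.Perm (G ⧸ H)) := ⊥
  haveI : DiscreteTopology (Equiv.Perm (G ⧸ H)) := ⟨rfl⟩
  haveI : DiscreteTopology (G ⧸ H) := QuotientGroup.discreteTopology hH
  rw [continuous_discrete_rng]
  intro σ
  have hset : (MulAction.toPermHom G (G ⧸ H)) ⁻¹' {σ}
      = ⋂ x : G ⧸ H, (fun g : G => g • x) ⁻¹' {σ x} := by
    ext g
    simp [Equiv.ext_iff]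
  rw [hset]
  exact isOpen_iInter_of_finite fun x =>
    (isOpen_discrete {σ x}).preimage (continuous_id.smul continuous_const)

/-- In a topologically finitely generated compact group, there are finitely many open
subgroups of index at most `n`. -/
private lemma finitely_many_open_subgroups {G : Type*} [Group G] [TopologicalSpace G]
    [IsTopologicalGroup G] [CompactSpace G]
    {S : Set G} (hSfin : S.Finite)
    (hdense : closure ((Subgroup.closure S : Subgroup G) : Set G) = Set.univ) (n : ℕ) :
    {H : Subgroup G | IsOpen (H : Set G) ∧ H.index ≤ n}.Finite := by
  letI : TopologicalSpace (Equiv.Perm (Fin n)) := ⊥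
  haveI : DiscreteTopology (Equiv.Perm (Fin n)) := ⟨rfl⟩
  haveI : Finite S := hSfin
  set 𝒮 := {H : Subgroup G | IsOpen (H : Set G) ∧ H.index ≤ n} with h𝒮
  rw [← Set.finite_coe_iff]
  have key : ∀ H : 𝒮, ∃ (ψ : G →* Equiv.Perm (Fin n)) (i : Fin n),
      Continuous ψ ∧ ∀ g : G, g ∈ (H : Subgroup G) ↔ ψ g i = i := by
    rintro ⟨H, hHo, hHn⟩
    haveI : Finite (G ⧸ H) := H.quotient_finite_of_isOpen hHo
    haveI : Fintype (G ⧸ H) := Fintype.ofFinite _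
    have hcard : Fintype.card (G ⧸ H) ≤ Fintype.card (Fin n) := by
      rw [Fintype.card_fin, ← Nat.card_eq_fintype_card, ← Subgroup.index_eq_card]
      exact hHn
    obtain ⟨e⟩ := Function.Embedding.nonempty_of_card_le hcard
    letI : TopologicalSpace (Equiv.Perm (G ⧸ H)) := ⊥
    haveI : DiscreteTopology (Equiv.Perm (G ⧸ H)) := ⟨rfl⟩
    refine ⟨(Equiv.Perm.viaEmbeddingHom e).comp (MulAction.toPermHom G (G ⧸ H)),
      e ((1 : G) : G ⧸ H), ?_, ?_⟩
    · show Continuous (⇑(Equiv.Perm.viaEmbeddingHom e) ∘ ⇑(MulAction.toPermHom G (G ⧸ H)))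
      exact continuous_of_discreteTopology.comp (perm_action_continuous H hHo)
    · intro g
      rw [MonoidHom.comp_apply, Equiv.Perm.viaEmbeddingHom_apply, Equiv.Perm.viaEmbedding_apply,
        e.injective.eq_iff]
      show g ∈ H ↔ g • ((1 : G) : G ⧸ H) = ((1 : G) : G ⧸ H)
      have : g • ((1 : G) : G ⧸ H) = ((g : G) : G ⧸ H) := by
        show (QuotientGroup.mk (g * 1) : G ⧸ H) = _
        rw [mul_one]
      rw [this]
      constructor
      · intro hg
        exact (QuotientGroup.eq).2 (by simpa using H.inv_mem hg)
      · intro hg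
        have := (QuotientGroup.eq).1 hg
        simpa using H.inv_mem this
  choose ψ idx hcont hmem using key
  have hinj : Function.Injective (fun H : 𝒮 => ((fun s : S => ψ H s, idx H) :
      (S → Equiv.Perm (Fin n)) × Fin n)) := by
    intro H1 H2 heq
    simp only [Prod.mk.injEq] at heq
    obtain ⟨h1, h2⟩ := heq
    have hψ : ψ H1 = ψ H2 := by
      have hS : Set.EqOn (ψ H1) (ψ H2) S := fun s hs => congrFun h1 ⟨s, hs⟩
      have hcl : Set.EqOn (ψ H1) (ψ H2) ((Subgroup.closure S : Subgroup G) : Set G) :=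
        MonoidHom.eqOn_closure hS
      have hcl2 : Set.EqOn (ψ H1) (ψ H2)
          (closure ((Subgroup.closure S : Subgroup G) : Set G)) :=
        hcl.closure (hcont H1) (hcont H2)
      refine MonoidHom.ext fun g => ?_
      exact hcl2 (by rw [hdense]; trivial)
    have : (H1 : Subgroup G) = (H2 : Subgroup G) := by
      ext g
      rw [hmem H1 g, hmem H2 g, hψ, h2]
    exact Subtype.ext this
  exact Finite.of_injective _ hinj

/-- A topologically finitely generated profinite group has a neighbourhood basis of the
identity consisting of open (normal) subgroups invariant under all continuous automorphisms:
every open subgroup `U` contains an open normal subgroup `V` which is invariant under every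
continuous automorphism. -/
theorem stmt5 (G : Type*) [Group G] [TopologicalSpace G] [IsTopologicalGroup G]
    [CompactSpace G] [TotallyDisconnectedSpace G] [T2Space G]
    (hfg : ∃ S : Set G, S.Finite ∧ closure ((Subgroup.closure S : Subgroup G) : Set G) = Set.univ)
    (U : Subgroup G) (hU : IsOpen (U : Set G)) :
    ∃ V : Subgroup G, V.Normal ∧ IsOpen (V : Set G) ∧ V ≤ U ∧
      ∀ φ : G ≃* G, Continuous φ → Subgroup.map φ.toMonoidHom V = V := by
  obtain ⟨S, hSfin, hdense⟩ := hfg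
  set n := U.index with hn
  set 𝒮 := {H : Subgroup G | IsOpen (H : Set G) ∧ H.index ≤ n} with h𝒮
  have hfin : 𝒮.Finite := finitely_many_open_subgroups hSfin hdense n
  have hU𝒮 : U ∈ 𝒮 := ⟨hU, le_refl _⟩
  -- closure of 𝒮 under comap by continuous automorphisms
  have hmem : ∀ (φ : G ≃* G), Continuous φ → ∀ H ∈ 𝒮, Subgroup.comap φ.toMonoidHom H ∈ 𝒮 := by
    rintro φ hφ H ⟨hHo, hHn⟩
    refine ⟨?_, ?_⟩
    · rw [Subgroup.coe_comap]
      exact hHo.preimage (by exact hφ)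
    · rw [H.index_comap_of_surjective (f := φ.toMonoidHom) φ.surjective]
      exact hHn
  -- invariance of sInf 𝒮 under continuous automorphisms
  have hinv : ∀ φ : G ≃* G, Continuous φ → Subgroup.map φ.toMonoidHom (sInf 𝒮) = sInf 𝒮 := by
    intro φ hφ
    have hφsymm : Continuous φ.symm := by
      have h2 := (Continuous.homeoOfEquivCompactToT2 (f := φ.toEquiv) hφ).symm.continuous
      exact h2
    have himg : (fun H => Subgroup.comap φ.symm.toMonoidHom H) '' 𝒮 = 𝒮 := by
      ext H
      constructor
      · rintro ⟨K, hK, rfl⟩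
        exact hmem φ.symm hφsymm K hK
      · intro hH
        refine ⟨Subgroup.comap φ.toMonoidHom H, hmem φ hφ H hH, ?_⟩
        show Subgroup.comap φ.symm.toMonoidHom (Subgroup.comap φ.toMonoidHom H) = H
        rw [Subgroup.comap_comap]
        have hcomp : φ.toMonoidHom.comp φ.symm.toMonoidHom = MonoidHom.id G := by
          ext x
          simp
        rw [hcomp, Subgroup.comap_id]
    rw [Subgroup.map_equiv_eq_comap_symm']
    calc Subgroup.comap φ.symm.toMonoidHom (sInf 𝒮)
        = sInf ((fun H => Subgroup.comap φ.symm.toMonoidHom H) '' 𝒮) := by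
          rw [sInf_image', sInf_eq_iInf', Subgroup.comap_iInf]
      _ = sInf 𝒮 := by rw [himg]
  refine ⟨sInf 𝒮, ?_, ?_, sInf_le hU𝒮, hinv⟩
  · -- normality via conjugation automorphisms
    constructor
    intro x hx g
    have hc : Continuous (MulAut.conj g : G ≃* G) := by
      have : ⇑(MulAut.conj g : G ≃* G) = fun x => g * x * g⁻¹ := by
        funext x; simp [MulAut.conj_apply]
      rw [this]
      fun_prop
    have h := hinv (MulAut.conj g) hc
    rw [← h]
    exact ⟨x, hx, by simp [MulAut.conj_apply]⟩
  · -- openness: finite intersection of open subgroups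
    rw [Subgroup.coe_sInf]
    exact hfin.isOpen_biInter fun H hH => hH.1
end

section
/- Let G be a profinite group and let (N_i)_{i∈I} be a directed (downward) family of closed normal subgroups of G with ⋂_{i∈I} N_i = {1}. Let x, y ∈ G and suppose that for every i ∈ I the image of x in G/N_i is conjugate to some element of the closure of the cyclic subgroup generated by the image of y in G/N_i. Then x is conjugate in G to an element of the closure of the cyclic subgroup generated by y. -/
open scoped Pointwise in
/-- Let `G` be a profinite group and `(N i)` a downward-directed family of closed normal
subgroups with `⋂ i, N i = 1`.  If for every `i` the image of `x` in `G / N i` is conjugate to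
an element of the closure of the procyclic subgroup generated by the image of `y` (i.e. there
are `g` and `z` in the closure of `⟨y⟩` with `x ≡ g z g⁻¹ mod N i`), then `x` is conjugate in
`G` to an element of the closure of `⟨y⟩`. -/
theorem stmt11 {G : Type*} [Group G] [TopologicalSpace G] [IsTopologicalGroup G]
    [CompactSpace G] [TotallyDisconnectedSpace G] [T2Space G]
    {I : Type*} [Nonempty I] (N : I → Subgroup G)
    (hnorm : ∀ i, (N i).Normal) (hclosed : ∀ i, IsClosed ((N i : Subgroup G) : Set G))
    (hdir : ∀ i j, ∃ k, N k ≤ N i ⊓ N j) (hint : ⨅ i, N i = ⊥)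
    (x y : G)
    (h : ∀ i, ∃ g : G, ∃ z ∈ closure ((Subgroup.zpowers y : Subgroup G) : Set G),
      (g * z * g⁻¹)⁻¹ * x ∈ N i) :
    ∃ g : G, ∃ z ∈ closure ((Subgroup.zpowers y : Subgroup G) : Set G), x = g * z * g⁻¹ := by
  set K : Set G := closure ((Subgroup.zpowers y : Subgroup G) : Set G) with hK
  set C : I → Set (G × G) := fun i =>
    {p : G × G | p.2 ∈ K ∧ (p.1 * p.2 * p.1⁻¹)⁻¹ * x ∈ N i} with hC
  have hCclosed : ∀ i, IsClosed (C i) := by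
    intro i
    have hcont : Continuous (fun p : G × G => (p.1 * p.2 * p.1⁻¹)⁻¹ * x) := by
      continuity
    exact ((isClosed_closure.preimage continuous_snd).inter
      ((hclosed i).preimage hcont))
  have hCne : ∀ i, (C i).Nonempty := by
    intro i
    obtain ⟨g, z, hz, hmem⟩ := h i
    exact ⟨(g, z), hz, hmem⟩
  have hCdir : Directed (· ⊇ ·) C := by
    intro i j
    obtain ⟨k, hk⟩ := hdir i j
    exact ⟨k, fun p hp => ⟨hp.1, (hk hp.2).1⟩, fun p hp => ⟨hp.1, (hk hp.2).2⟩⟩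
  obtain ⟨⟨g, z⟩, hp⟩ := IsCompact.nonempty_iInter_of_directed_nonempty_isCompact_isClosed
    C hCdir hCne (fun i => (hCclosed i).isCompact) hCclosed
  simp only [Set.mem_iInter] at hp
  refine ⟨g, z, (hp (Classical.arbitrary I)).1, ?_⟩
  have hall : (g * z * g⁻¹)⁻¹ * x ∈ ⨅ i, N i := by
    rw [Subgroup.mem_iInf]
    exact fun i => (hp i).2
  rw [hint, Subgroup.mem_bot] at hall
  have := mul_eq_one_iff_inv_eq.mp hall
  simp at this
  rw [← this]
end

section
/- Let F be a free group and x, y ∈ F with x ≠ 1. If the normal closure of x equals the normal closure of y, then y ≠ 1 and x, y generate the same normal closure as cyclic subgroups; moreover, in the abelianization F^{ab}, the images of x and y generate the same cyclic subgroup, hence the image of x equals ± the image of y in F^{ab}. -/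
lemma aux_of_surjective {α : Type*} :
    Function.Surjective (Abelianization.of (G := FreeGroup α)) :=
  QuotientGroup.mk'_surjective _

lemma aux_zpowers_eq {α : Type*} (x y : FreeGroup α)
    (h : Subgroup.normalClosure ({x} : Set (FreeGroup α)) =
      Subgroup.normalClosure ({y} : Set (FreeGroup α))) :
    Subgroup.zpowers (Abelianization.of x) = Subgroup.zpowers (Abelianization.of y) := by
  have key : ∀ z : FreeGroup α,
      (Subgroup.normalClosure ({z} : Set (FreeGroup α))).map
        (Abelianization.of (G := FreeGroup α)) = Subgroup.zpowers (Abelianization.of z) := by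
    intro z
    rw [Subgroup.map_normalClosure _ _ aux_of_surjective, Set.image_singleton]
    apply le_antisymm
    · exact Subgroup.normalClosure_le_normal (by simp [Subgroup.mem_zpowers])
    · rw [Subgroup.zpowers_le]
      exact Subgroup.subset_normalClosure rfl
  rw [← key, ← key, h]

lemma aux_abel_torsionfree {α : Type*} (a : Abelianization (FreeGroup α)) (ha : a ≠ 1)
    {n : ℤ} (hn : a ^ n = 1) : n = 0 := by
  by_contra hn0
  apply ha
  have f := FreeAbelianGroup.equivFinsupp α
  have key : (n • (Additive.ofMul a) : FreeAbelianGroup α) = 0 := by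
    rw [← ofMul_zpow, hn]; rfl
  have h2 : n • f (Additive.ofMul a) = 0 := by
    exact (map_zsmul f n (Additive.ofMul a : FreeAbelianGroup α)).symm.trans ((congrArg f key).trans (map_zero f))
  rcases smul_eq_zero.mp h2 with h | h
  · exact absurd h hn0
  · have : (Additive.ofMul a : FreeAbelianGroup α) = 0 := by
      apply f.injective; exact h.trans (map_zero f).symm
    exact this

/-- Magnus' theorem, abelianized consequence: if `x ≠ 1` and `y` are elements of a free group
with the same normal closure, then `y ≠ 1` and the images of `x` and `y` in the abelianization
differ by a sign. -/
theorem stmt15 {α : Type*} (x y : FreeGroup α) (hx : x ≠ 1)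
    (h : Subgroup.normalClosure ({x} : Set (FreeGroup α)) =
      Subgroup.normalClosure ({y} : Set (FreeGroup α))) :
    y ≠ 1 ∧ (Abelianization.of x = Abelianization.of y ∨
      Abelianization.of x = (Abelianization.of y)⁻¹) := by
  have hy : y ≠ 1 := by
    rintro rfl
    apply hx
    have hx1 : x ∈ Subgroup.normalClosure ({(1 : FreeGroup α)} : Set (FreeGroup α)) := by
      rw [← h]; exact Subgroup.subset_normalClosure rfl
    have hbot : Subgroup.normalClosure ({(1 : FreeGroup α)} : Set (FreeGroup α)) = ⊥ :=
      le_antisymm (Subgroup.normalClosure_le_normal (by simp)) bot_le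
    rw [hbot] at hx1
    exact hx1
  refine ⟨hy, ?_⟩
  have hz := aux_zpowers_eq x y h
  have h1 : Abelianization.of x ∈ Subgroup.zpowers (Abelianization.of y) :=
    hz ▸ Subgroup.mem_zpowers _
  have h2 : Abelianization.of y ∈ Subgroup.zpowers (Abelianization.of x) :=
    hz.symm ▸ Subgroup.mem_zpowers _
  obtain ⟨k, hk⟩ := Subgroup.mem_zpowers_iff.mp h1
  obtain ⟨m, hm⟩ := Subgroup.mem_zpowers_iff.mp h2
  by_cases hA : Abelianization.of x = 1
  · left
    have hb1 : Abelianization.of y = 1 := by rw [← hm, hA, one_zpow]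
    rw [hA, hb1]
  · have key : (Abelianization.of x) ^ (m * k) = Abelianization.of x := by
      rw [zpow_mul, hm, hk]
    have h3 : (Abelianization.of x) ^ (m * k - 1) = 1 := by
      rw [zpow_sub, key, zpow_one, mul_inv_cancel]
    have hmk := aux_abel_torsionfree _ hA h3
    have hmk1 : m * k = 1 := by omega
    rcases Int.eq_one_or_neg_one_of_mul_eq_one' hmk1 with ⟨hm1, hk1⟩ | ⟨hm1, hk1⟩
    · left; rw [← hk, hk1, zpow_one]
    · right; rw [← hk, hk1, zpow_neg_one]
end
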